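/- Let n ≥ 1 and consider the set S = {1, …, 2n+1} × {A, B, C} ∪ {1, …, 2n+1} × {A', B', C'} of tail-edge labels of the 3-crossing hexagonal template. Define the pairing given by the exterior connections iX ↔ iX' (for X ∈ {A, B, C}) and the interior connections: 1A' ↔ (2n+1)C, 1B' ↔ (2n+1)A, 1C' ↔ (2n+1)B; (2i+1)X ↔ 2(n−i)Y for the cyclic pairs (X,Y) ∈ {(A,C),(B,A),(C,B)} and i = 0,…,n−1; and (2i+1)X' ↔ (2(n−i)+2)Y' for (X',Y') ∈ {(A',C'),(B',A'),(C',B')} and i = 1,…,n. Then the permutation obtained by alternately applying the exterior and interior pairings acts transitively on S, i.e., the resulting closed curve is a single component (a knot, not a link). -/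

import Mathlib

/-- Labels for the six families of tail edges of the 3-crossing hexagonal template. -/
inductive Label3 : Type
  | A | B | C | A' | B' | C'
deriving DecidableEq

open Label3 in
/-- The pairing rules (exterior and interior connections) on labels `(i, X)`,
listed as directed pairs; the graph will symmetrize them. -/
def pair3 (n : ℕ) : ℕ × Label3 → ℕ × Label3 → Prop := fun x y =>
  -- exterior connections iX ↔ iX'
  (∃ i, 1 ≤ i ∧ i ≤ 2 * n + 1 ∧
    ((x = (i, A) ∧ y = (i, A')) ∨ (x = (i, B) ∧ y = (i, B')) ∨
     (x = (i, C) ∧ y = (i, C')))) ∨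
  -- interior connections across the hexagon
  ((x = (1, A') ∧ y = (2 * n + 1, C)) ∨
   (x = (1, B') ∧ y = (2 * n + 1, A)) ∨
   (x = (1, C') ∧ y = (2 * n + 1, B))) ∨
  (∃ i, i ≤ n - 1 ∧
    ((x = (2 * i + 1, A) ∧ y = (2 * (n - i), C)) ∨
     (x = (2 * i + 1, B) ∧ y = (2 * (n - i), A)) ∨
     (x = (2 * i + 1, C) ∧ y = (2 * (n - i), B)))) ∨
  (∃ i, 1 ≤ i ∧ i ≤ n ∧
    ((x = (2 * i + 1, A') ∧ y = (2 * (n - i) + 2, C')) ∨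
     (x = (2 * i + 1, B') ∧ y = (2 * (n - i) + 2, A')) ∨
     (x = (2 * i + 1, C') ∧ y = (2 * (n - i) + 2, B'))))

/-- The tail-edge labels `{1,…,2n+1} × {A,B,C,A',B',C'}` of the template. -/
def S3 (n : ℕ) : Type := {i : ℕ // 1 ≤ i ∧ i ≤ 2 * n + 1} × Label3

/-!
Every vertex `(i, X')` is joined to `(i, X)` by an exterior connection, so it suffices to link the
unprimed vertices. Writing `Y` for the partner letter of `X`, the path
`(2j+1, X) — (2(n-j), Y) — (2(n-j), Y') — (2j+3, X') — (2j+3, X)` joins consecutive odd indices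
with the same letter, so each `(2j+1, X)` reaches `(1, X)`; the crossing connection
`(1, X') — (2n+1, Y)` then joins `(1, X)` to `(1, Y)`, and the letters form a single cycle under
`X ↦ Y`. Each even vertex `(2m, Y)` is adjacent to the odd vertex `(2(n-m)+1, X)`.
-/

namespace Template3

/-- The three letters `A, B, C`; each one names the tail edges `X` and `X'`. -/
inductive Letter : Type
  | a | b | c

namespace Letter

def unprimed : Letter → Label3
  | a => .A | b => .B | c => .C

def primed : Letter → Label3
  | a => .A' | b => .B' | c => .C'

/-- The letter pairing `X ↦ Y` of the interior connections. -/
def next : Letter → Letter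
  | a => c | b => a | c => b

lemma exists_label_eq (L : Label3) : ∃ X : Letter, L = X.unprimed ∨ L = X.primed := by
  cases L
  exacts [⟨a, .inl rfl⟩, ⟨b, .inl rfl⟩, ⟨c, .inl rfl⟩,
    ⟨a, .inr rfl⟩, ⟨b, .inr rfl⟩, ⟨c, .inr rfl⟩]

lemma exists_next_eq (Y : Letter) : ∃ X : Letter, X.next = Y := by
  cases Y
  exacts [⟨b, rfl⟩, ⟨c, rfl⟩, ⟨a, rfl⟩]

lemma unprimed_ne_primed (X Y : Letter) : X.unprimed ≠ Y.primed := by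
  cases X <;> cases Y <;> decide

end Letter

open Letter

variable {n : ℕ}

def graph (n : ℕ) : SimpleGraph (S3 n) :=
  SimpleGraph.fromRel fun a b : S3 n => pair3 n (a.1.1, a.2) (b.1.1, b.2)

def vtx (n i : ℕ) (L : Label3) (h : 1 ≤ i ∧ i ≤ 2 * n + 1 := by omega) : S3 n :=
  (⟨i, h⟩, L)

lemma vtx_congr {i j : ℕ} {L : Label3} (hi : 1 ≤ i ∧ i ≤ 2 * n + 1)
    (hj : 1 ≤ j ∧ j ≤ 2 * n + 1) (h : i = j) : vtx n i L hi = vtx n j L hj := by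
  subst h; rfl

lemma adj_vtx {i j : ℕ} {L M : Label3} {hi : 1 ≤ i ∧ i ≤ 2 * n + 1}
    {hj : 1 ≤ j ∧ j ≤ 2 * n + 1} (hne : i ≠ j ∨ L ≠ M) (h : pair3 n (i, L) (j, M)) :
    (graph n).Adj (vtx n i L hi) (vtx n j M hj) := by
  refine SimpleGraph.fromRel_adj _ _ _ |>.mpr ⟨?_, .inl h⟩
  rintro ⟨⟩
  simp at hne

lemma adj_unprimed_primed (i : ℕ) (hi : 1 ≤ i ∧ i ≤ 2 * n + 1) (X : Letter) :
    (graph n).Adj (vtx n i X.unprimed) (vtx n i X.primed) :=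
  adj_vtx (.inr (unprimed_ne_primed X X)) <| .inl
    ⟨i, hi.1, hi.2, by cases X <;> simp [unprimed, primed]⟩

lemma adj_odd_even (j : ℕ) (hj : j < n) (X : Letter) :
    (graph n).Adj (vtx n (2 * j + 1) X.unprimed) (vtx n (2 * (n - j)) X.next.unprimed) :=
  adj_vtx (.inl (by omega)) <| .inr <| .inr <| .inl
    ⟨j, by omega, by cases X <;> simp [unprimed, next]⟩

lemma adj_odd_even_primed (j : ℕ) (hj : j < n) (X : Letter) :
    (graph n).Adj (vtx n (2 * j + 3) X.primed) (vtx n (2 * (n - j)) X.next.primed) :=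
  adj_vtx (.inl (by omega)) <| .inr <| .inr <| .inr
    ⟨j + 1, by omega, by omega, by cases X <;> simp [primed, next] <;> omega⟩

lemma adj_one_primed_last (X : Letter) :
    (graph n).Adj (vtx n 1 X.primed) (vtx n (2 * n + 1) X.next.unprimed) :=
  adj_vtx (.inr (unprimed_ne_primed _ _).symm) <| .inr <| .inl <| by
    cases X <;> simp [primed, unprimed, next]

lemma reachable_odd_succ (j : ℕ) (hj : j < n) (X : Letter) :
    (graph n).Reachable (vtx n (2 * j + 1) X.unprimed) (vtx n (2 * j + 3) X.unprimed) :=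
  (adj_odd_even j hj X).reachable
    |>.trans (adj_unprimed_primed _ (by omega) X.next).reachable
    |>.trans (adj_odd_even_primed j hj X).reachable.symm
    |>.trans (adj_unprimed_primed _ (by omega) X).reachable.symm

lemma reachable_odd_one (X : Letter) :
    ∀ (j : ℕ) (hj : j ≤ n),
      (graph n).Reachable (vtx n (2 * j + 1) X.unprimed) (vtx n 1 X.unprimed)
  | 0, _ => .refl _
  | j + 1, hj => by
    rw [vtx_congr _ (by omega) (by ring : 2 * (j + 1) + 1 = 2 * j + 3)]
    exact (reachable_odd_succ j hj X).symm.trans (reachable_odd_one X j (by omega))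

lemma reachable_one_next (X : Letter) :
    (graph n).Reachable (vtx n 1 X.unprimed) (vtx n 1 X.next.unprimed) :=
  (adj_unprimed_primed 1 (by omega) X).reachable
    |>.trans (adj_one_primed_last X).reachable
    |>.trans (reachable_odd_one X.next n le_rfl)

lemma reachable_one_a (X : Letter) :
    (graph n).Reachable (vtx n 1 X.unprimed) (vtx n 1 a.unprimed) := by
  have hc : (graph n).Reachable (vtx n 1 c.unprimed) (vtx n 1 a.unprimed) :=
    (reachable_one_next a).symm
  cases X
  exacts [.refl _, (reachable_one_next c).symm.trans hc, hc]

lemma reachable_unprimed (i : ℕ) (hi : 1 ≤ i ∧ i ≤ 2 * n + 1) (X : Letter) :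
    (graph n).Reachable (vtx n i X.unprimed) (vtx n 1 a.unprimed) := by
  rcases Nat.even_or_odd' i with ⟨k, rfl | rfl⟩
  · obtain ⟨Y, rfl⟩ := exists_next_eq X
    rw [vtx_congr _ (by omega) (by omega : 2 * k = 2 * (n - (n - k)))]
    exact (adj_odd_even (n - k) (by omega) Y).reachable.symm
      |>.trans (reachable_odd_one Y (n - k) (by omega))
      |>.trans (reachable_one_a Y)
  · exact (reachable_odd_one X k (by omega)).trans (reachable_one_a X)

theorem graph_connected (n : ℕ) : (graph n).Connected := by
  have : Nonempty (S3 n) := ⟨vtx n 1 .A⟩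
  refine .mk fun u v => ?_
  suffices hub : ∀ w, (graph n).Reachable w (vtx n 1 a.unprimed) from (hub u).trans (hub v).symm
  rintro ⟨⟨i, hi⟩, L⟩
  obtain ⟨X, rfl | rfl⟩ := exists_label_eq L
  · exact reachable_unprimed i hi X
  · exact (adj_unprimed_primed i hi X).reachable.symm.trans (reachable_unprimed i hi X)

end Template3

theorem template3_single_component_general (n : ℕ) :
    (SimpleGraph.fromRel (fun a b : S3 n =>
      pair3 n (a.1.1, a.2) (b.1.1, b.2))).Connected :=
  Template3.graph_connected n

/-- the graph on the tail-edge labels whose edges are given by the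
exterior and interior pairings is connected: the template traces a single
closed curve, i.e. a knot and not a link. -/
theorem template3_single_component (n : ℕ) (hn : 1 ≤ n) :
    (SimpleGraph.fromRel (fun a b : S3 n =>
      pair3 n (a.1.1, a.2) (b.1.1, b.2))).Connected :=
  template3_single_component_general n
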